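/- In Y_R(so_3), one has e_{-1,1}(u) = [e^{(1)}_{-1,0}, e_{-1,0}(u)] - e_{-1,0}(u)², where e^{(1)}_{-1,0} is the coefficient of u^{-1} in e_{-1,0}(u). -/

import Mathlib

noncomputable section

/-- Two-variable formal series ring: Laurent-type series in `u⁻¹` (outer) over
Laurent-type series in `v⁻¹` (inner) with coefficients in `A`.  In this ring both
variables `u`, `v` and differences such as `u - v`, `u - v - 1/2` make sense. -/
abbrev KK (A : Type) [Ring A] : Type := HahnSeries ℤ (HahnSeries ℤ A)

variable {A : Type} [Ring A]

/-- embed a series `a(u) = ∑_{n≥0} a_n u^{-n}` (u = outer variable) -/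
def su (a : ℕ → A) : KK A :=
  HahnSeries.ofPowerSeries ℤ (HahnSeries ℤ A) (PowerSeries.mk (fun n => HahnSeries.C (a n)))

/-- embed a series `a(v) = ∑_{n≥0} a_n v^{-n}` (v = inner variable) -/
def sv (a : ℕ → A) : KK A :=
  HahnSeries.C (HahnSeries.ofPowerSeries ℤ A (PowerSeries.mk a))

/-- the variable `u` -/
def Uu : KK A := HahnSeries.single (-1 : ℤ) 1
/-- the variable `v` -/
def Vv : KK A := HahnSeries.C (HahnSeries.single (-1 : ℤ) 1)

/-- constants -/
def cA (a : A) : KK A := HahnSeries.C (HahnSeries.C a)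

/-- coefficients of the shifted series `a(u+c)`, using
`(u+c)^{-r} = ∑_{j≥0} (-1)^j C(r-1+j,j) c^j u^{-r-j}`. -/
def shPow [Algebra ℚ A] (c : ℚ) (a : ℕ → A) : ℕ → A :=
  fun m => ∑ r ∈ Finset.range (m + 1),
    (algebraMap ℚ A ((-c) ^ (m - r) * ((m - 1).choose (m - r) : ℚ))) * a r

/-- the central scalar 1/2 = κ -/
def half [Algebra ℚ A] : KK A := cA (algebraMap ℚ A (1/2))

/-- Kronecker delta in `KK A` -/
def kd {ι : Type} [DecidableEq ι] (i j : ι) : KK A := if i = j then 1 else 0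

variable (A) in
/-- The RTT Yangian `Y_R(so₃)`: the indices `-1, 0, 1` are encoded as `0, 1, 2 : Fin 3`,
so that the index `-i` corresponds to `Fin.rev`.  The data consists of the matrix
generator coefficients `t i j r` (with `t_{ij}(u) = ∑_r t_{ij}^{(r)} u^{-r}`,
`t_{ij}^{(0)} = δ_{ij}`) subject to the entrywise RTT relation (with denominators
`u-v`, `u-v-1/2` cleared) and the unitarity relation `T(u)Tᵗ(u+1/2) = Tᵗ(u+1/2)T(u) = 1`,
together with the Gauss generators `e`, `f`, `k` (and the inverses of the `k`'s)
defined by the unique Gauss decomposition `T(u) = F(u)K(u)E(u)`. -/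
structure YRso3 (A : Type) [Ring A] [Algebra ℚ A] where
  t : Fin 3 → Fin 3 → ℕ → A
  t_zero : ∀ i j, t i j 0 = if i = j then 1 else 0
  /-- `(u-v)(u-v-1/2)[t_{ij}(u),t_{kl}(v)] = (u-v-1/2)(t_{kj}(u)t_{il}(v)-t_{kj}(v)t_{il}(u))
      - (u-v)(δ_{k,-i} ∑_p t_{pj}(u)t_{-p,l}(v) - δ_{l,-j} ∑_p t_{k,-p}(v)t_{ip}(u))` -/
  rtt : ∀ i j k l : Fin 3,
    (Uu - Vv) * (Uu - Vv - half) * (su (t i j) * sv (t k l) - sv (t k l) * su (t i j)) =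
      (Uu - Vv - half) * (su (t k j) * sv (t i l) - sv (t k j) * su (t i l)) -
      (Uu - Vv) * (kd k i.rev * ∑ p : Fin 3, su (t p j) * sv (t p.rev l) -
                   kd l j.rev * ∑ p : Fin 3, sv (t k p.rev) * su (t i p))
  /-- `T(u)Tᵗ(u+1/2) = 1` -/
  unitary₁ : ∀ i j : Fin 3,
    ∑ p : Fin 3, su (t i p) * su (shPow (1/2) (t j.rev p.rev)) = kd i j
  /-- `Tᵗ(u+1/2)T(u) = 1` -/
  unitary₂ : ∀ i j : Fin 3,
    ∑ p : Fin 3, su (shPow (1/2) (t p.rev i.rev)) * su (t p j) = kd i j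
  -- Gauss generators: e₋₁,₀ e₀₁ e₋₁,₁ f₀,₋₁ f₁₀ f₁,₋₁ k₋₁ k₀ k₁ and the inverses k⁻¹
  e10 : ℕ → A
  e01 : ℕ → A
  e11 : ℕ → A
  f01 : ℕ → A
  f10 : ℕ → A
  f11 : ℕ → A
  km1 : ℕ → A
  k0 : ℕ → A
  k1 : ℕ → A
  km1' : ℕ → A
  k0' : ℕ → A
  k1' : ℕ → A
  e10_zero : e10 0 = 0
  e01_zero : e01 0 = 0
  e11_zero : e11 0 = 0
  f01_zero : f01 0 = 0
  f10_zero : f10 0 = 0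
  f11_zero : f11 0 = 0
  km1_zero : km1 0 = 1
  k0_zero : k0 0 = 1
  k1_zero : k1 0 = 1
  -- the Gauss decomposition T(u) = F(u)K(u)E(u), entrywise
  g11 : su (t 0 0) = su km1
  g12 : su (t 0 1) = su km1 * su e10
  g13 : su (t 0 2) = su km1 * su e11
  g21 : su (t 1 0) = su f01 * su km1
  g22 : su (t 1 1) = su k0 + su f01 * su km1 * su e10
  g23 : su (t 1 2) = su k0 * su e01 + su f01 * su km1 * su e11
  g31 : su (t 2 0) = su f11 * su km1
  g32 : su (t 2 1) = su f10 * su k0 + su f11 * su km1 * su e10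
  g33 : su (t 2 2) = su k1 + su f10 * su k0 * su e01 + su f11 * su km1 * su e11
  -- the inverses of the diagonal Gauss generators
  km1_inv₁ : su km1 * su km1' = 1
  km1_inv₂ : su km1' * su km1 = 1
  k0_inv₁ : su k0 * su k0' = 1
  k0_inv₂ : su k0' * su k0 = 1
  k1_inv₁ : su k1 * su k1' = 1
  k1_inv₂ : su k1' * su k1 = 1


/-!
The coefficient of `u⁻¹` in the unitarity relation `T(u)Tᵗ(u+1/2) = 1` gives
`t⁽¹⁾₀₁ = -t⁽¹⁾₋₁,₀ = -e⁽¹⁾₋₁,₀`. When `δ_{k,-i} = δ_{l,-j} = 0`, the RTT relation reduces,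
after cancelling the regular factor `u - v - 1/2`, to
`(u-v)[t_{ij}(u), t_{kl}(v)] = t_{kj}(u)t_{il}(v) - t_{kj}(v)t_{il}(u)`, and the coefficient
of `v⁰` (the limit `v → ∞`) gives `[t_{ik}(u), t⁽¹⁾_{kl}] = t_{il}(u)` when
`t_{kl}⁽⁰⁾ = t_{il}⁽⁰⁾ = 0`. Through the Gauss decomposition, `(i,k,l) = (-1,-1,0)` gives
`[k₋₁(u), e⁽¹⁾₋₁,₀] = k₋₁(u)e₋₁,₀(u)` and `(i,k,l) = (-1,0,1)` gives
`[e⁽¹⁾₋₁,₀, k₋₁(u)e₋₁,₀(u)] = k₋₁(u)e₋₁,₁(u)`. Expanding the latter by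
the Leibniz rule and using the former yields
`k₋₁(u)e₋₁,₁(u) = k₋₁(u)([e⁽¹⁾₋₁,₀, e₋₁,₀(u)] - e₋₁,₀(u)²)`, and `k₋₁(u)` is invertible.
-/

def ser (a : ℕ → A) : HahnSeries ℤ A := HahnSeries.ofPowerSeries ℤ A (PowerSeries.mk a)

lemma ser_coeff_natCast (a : ℕ → A) (n : ℕ) : (ser a).coeff (n : ℤ) = a n := by
  rw [ser, HahnSeries.ofPowerSeries_apply_coeff, PowerSeries.coeff_mk]

lemma ofPowerSeries_coeff_of_neg {R : Type} [Semiring R] (x : PowerSeries R) {n : ℤ}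
    (hn : n < 0) : (HahnSeries.ofPowerSeries ℤ R x).coeff n = 0 := by
  rw [HahnSeries.ofPowerSeries_apply]
  refine HahnSeries.embDomain_notin_image_support ?_
  rintro ⟨m, -, hm⟩
  exact absurd hm (by simp only [Nat.castOrderEmbedding_apply]; omega)

lemma sv_eq_C_ser (a : ℕ → A) : sv a = HahnSeries.C (ser a) := rfl

lemma su_coeff (a : ℕ → A) (n : ℤ) : (su a).coeff n = HahnSeries.C ((ser a).coeff n) := by
  rcases le_or_gt 0 n with hn | hn
  · lift n to ℕ using hn
    rw [su, HahnSeries.ofPowerSeries_apply_coeff, PowerSeries.coeff_mk, ser_coeff_natCast]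
  · rw [su, ofPowerSeries_coeff_of_neg _ hn, ser, ofPowerSeries_coeff_of_neg _ hn, map_zero]

lemma su_mul_su_coeff_one (a b : ℕ → A) :
    (su a * su b).coeff 1 = HahnSeries.C (a 0 * b 1 + a 1 * b 0) := by
  rw [su, su, ← map_mul, ← Nat.cast_one, HahnSeries.ofPowerSeries_apply_coeff,
    PowerSeries.coeff_mul, Finset.Nat.sum_antidiagonal_eq_sum_range_succ_mk,
    Finset.sum_range_succ, Finset.sum_range_one]
  simp only [PowerSeries.coeff_mk, map_add, map_mul]

lemma single_neg_one_mul_coeff {R : Type} [Ring R] (x : HahnSeries ℤ R) (n : ℤ) :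
    (HahnSeries.single (-1 : ℤ) (1 : R) * x).coeff n = x.coeff (n + 1) := by
  simpa using HahnSeries.coeff_single_mul_add (r := (1 : R)) (x := x) (a := n + 1) (b := -1)

lemma coeff_C_mul {R : Type} [Ring R] (r : R) (x : HahnSeries ℤ R) (n : ℤ) :
    (HahnSeries.C r * x).coeff n = r * x.coeff n := by
  rw [HahnSeries.C_apply, HahnSeries.coeff_single_zero_mul]

lemma coeff_mul_C {R : Type} [Ring R] (r : R) (x : HahnSeries ℤ R) (n : ℤ) :
    (x * HahnSeries.C r).coeff n = x.coeff n * r := by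
  rw [HahnSeries.C_apply, HahnSeries.coeff_mul_single_zero]

lemma Uu_mul_coeff (x : KK A) (n : ℤ) : (Uu * x).coeff n = x.coeff (n + 1) :=
  single_neg_one_mul_coeff x n

lemma cA_neg (a : A) : cA (-a) = -cA a := by
  rw [cA, cA, map_neg, map_neg]

/-- The coefficient of `v⁻ᵏ`, as a series in `u`. -/
def vCoeff (k : ℤ) (x : KK A) : KK A :=
  x.map (HahnSeries.C.toAddMonoidHom.comp (HahnSeries.coeff.addMonoidHom k))

lemma vCoeff_coeff (k : ℤ) (x : KK A) (n : ℤ) :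
    (vCoeff k x).coeff n = HahnSeries.C ((x.coeff n).coeff k) := rfl

lemma vCoeff_sub (k : ℤ) (x y : KK A) : vCoeff k (x - y) = vCoeff k x - vCoeff k y :=
  HahnSeries.map_sub _

lemma vCoeff_Uu_mul (k : ℤ) (x : KK A) : vCoeff k (Uu * x) = Uu * vCoeff k x := by
  refine HahnSeries.ext (funext fun n => ?_)
  rw [vCoeff_coeff, Uu_mul_coeff, Uu_mul_coeff, vCoeff_coeff]

lemma vCoeff_Vv_mul (k : ℤ) (x : KK A) : vCoeff k (Vv * x) = vCoeff (k + 1) x := by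
  refine HahnSeries.ext (funext fun n => ?_)
  rw [vCoeff_coeff, vCoeff_coeff, Vv, coeff_C_mul, single_neg_one_mul_coeff]

lemma vCoeff_su_mul_C (k : ℤ) (a : ℕ → A) (s : HahnSeries ℤ A) :
    vCoeff k (su a * HahnSeries.C s) = su a * cA (s.coeff k) := by
  refine HahnSeries.ext (funext fun n => ?_)
  rw [vCoeff_coeff, cA, coeff_mul_C, coeff_mul_C, su_coeff, coeff_C_mul, ← map_mul]

lemma vCoeff_C_mul_su (k : ℤ) (a : ℕ → A) (s : HahnSeries ℤ A) :
    vCoeff k (HahnSeries.C s * su a) = cA (s.coeff k) * su a := by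
  refine HahnSeries.ext (funext fun n => ?_)
  rw [vCoeff_coeff, cA, coeff_C_mul, coeff_C_mul, su_coeff, coeff_mul_C, ← map_mul]

/-- The limit `v → ∞` of `(u-v)[a(u), b(v)] = p(u)q(v) - p(v)q(u)`. -/
lemma su_commutator_cA_of_Uu_sub_Vv_mul {a b p q : ℕ → A} (hb : b 0 = 0) (hp : p 0 = 1)
    (hq : q 0 = 0) (h : (Uu - Vv) * (su a * sv b - sv b * su a) = su p * sv q - sv p * su q) :
    su a * cA (b 1) - cA (b 1) * su a = su q := by
  have h0 := congrArg (vCoeff 0) h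
  rw [sub_mul, vCoeff_sub, vCoeff_Uu_mul, vCoeff_Vv_mul, zero_add] at h0
  simp only [vCoeff_sub, sv_eq_C_ser, vCoeff_su_mul_C, vCoeff_C_mul_su] at h0
  rw [← Nat.cast_zero, ← Nat.cast_one] at h0
  simp only [ser_coeff_natCast, hb, hp, hq, cA, map_zero, map_one, mul_zero, zero_mul,
    sub_zero, one_mul, zero_sub, neg_inj] at h0
  simpa only [cA] using h0

lemma eq_zero_of_Uu_sub_C_mul_eq_zero (q : HahnSeries ℤ A) {z : KK A}
    (h : (Uu - HahnSeries.C q) * z = 0) : z = 0 := by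
  have hshift : ∀ n : ℤ, z.coeff (n + 1) = q * z.coeff n := fun n => by
    have hn := congrArg (fun x : KK A => x.coeff n) h
    simp only [sub_mul, HahnSeries.coeff_sub, Uu_mul_coeff, coeff_C_mul,
      HahnSeries.coeff_zero] at hn
    exact sub_eq_zero.mp hn
  by_contra hz
  refine HahnSeries.coeff_order_eq_zero.not.2 hz ?_
  rw [← sub_add_cancel z.order 1, hshift, HahnSeries.coeff_eq_zero_of_lt_order (by omega),
    mul_zero]

section Yangian

variable [Algebra ℚ A]

lemma commute_half (x : KK A) : Commute half x := by
  ext n m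
  rw [half, cA, coeff_C_mul, coeff_C_mul, coeff_mul_C, coeff_mul_C]
  exact Algebra.commutes _ _

lemma shPow_zero (c : ℚ) (a : ℕ → A) : shPow c a 0 = a 0 := by
  simp [shPow]

lemma shPow_one (c : ℚ) (a : ℕ → A) : shPow c a 1 = a 1 := by
  simp [shPow, Finset.sum_range_succ]

namespace YRso3

variable (Y : YRso3 A)

lemma t_zero_of_ne {i j : Fin 3} (h : i ≠ j) : Y.t i j 0 = 0 := by
  rw [Y.t_zero, if_neg h]

lemma t_zero_self (i : Fin 3) : Y.t i i 0 = 1 := by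
  rw [Y.t_zero, if_pos rfl]

lemma t01_one_add_t12_one : Y.t 0 1 1 + Y.t 1 2 1 = 0 := by
  have h := congrArg (fun x : KK A => x.coeff 1) (Y.unitary₁ 0 1)
  simp only [kd, Fin.sum_univ_three, HahnSeries.coeff_add, su_mul_su_coeff_one] at h
  rw [if_neg (by decide), HahnSeries.coeff_zero, ← map_add, ← map_add, ← map_zero HahnSeries.C]
    at h
  have h' := HahnSeries.C_injective h
  simp only [shPow_zero, shPow_one, show Fin.rev (0 : Fin 3) = 2 from rfl,
    show Fin.rev (1 : Fin 3) = 1 from rfl, show Fin.rev (2 : Fin 3) = 0 from rfl,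
    Y.t_zero_self, Y.t_zero_of_ne (show (0 : Fin 3) ≠ 1 by decide),
    Y.t_zero_of_ne (show (0 : Fin 3) ≠ 2 by decide),
    Y.t_zero_of_ne (show (1 : Fin 3) ≠ 0 by decide),
    Y.t_zero_of_ne (show (1 : Fin 3) ≠ 2 by decide)] at h'
  rw [add_comm]
  simpa using h'

lemma t01_one_eq_e10_one : Y.t 0 1 1 = Y.e10 1 := by
  have h := congrArg (fun x : KK A => x.coeff 1) Y.g12
  simp only [← Nat.cast_one (R := ℤ), su_coeff, ser_coeff_natCast] at h
  rw [Nat.cast_one, su_mul_su_coeff_one, Y.km1_zero, Y.e10_zero] at h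
  simpa using HahnSeries.C_injective h

lemma rtt_of_ne {i j k l : Fin 3} (hk : k ≠ i.rev) (hl : l ≠ j.rev) :
    (Uu - Vv) * (su (Y.t i j) * sv (Y.t k l) - sv (Y.t k l) * su (Y.t i j)) =
      su (Y.t k j) * sv (Y.t i l) - sv (Y.t k j) * su (Y.t i l) := by
  have h := Y.rtt i j k l
  simp only [kd, if_neg hk, if_neg hl, zero_mul, sub_zero, mul_zero] at h
  have hcomm : Commute (Uu - Vv : KK A) (Uu - Vv - half) :=
    (Commute.refl _).sub_right (commute_half _).symm
  have hfactor : (Uu - Vv - half : KK A) =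
      Uu - HahnSeries.C (HahnSeries.single (-1) 1 + HahnSeries.C (algebraMap ℚ A (1 / 2))) := by
    rw [map_add, sub_sub, Vv, half, cA]
  refine sub_eq_zero.mp (eq_zero_of_Uu_sub_C_mul_eq_zero
    (HahnSeries.single (-1) 1 + HahnSeries.C (algebraMap ℚ A (1 / 2))) ?_)
  rw [← hfactor, mul_sub, ← mul_assoc, ← hcomm.eq, h, sub_self]

lemma su_t_commutator_cA_t_one {i k l : Fin 3} (hki : k ≠ i.rev) (hlk : l ≠ k.rev)
    (hkl : k ≠ l) (hil : i ≠ l) :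
    su (Y.t i k) * cA (Y.t k l 1) - cA (Y.t k l 1) * su (Y.t i k) = su (Y.t i l) :=
  su_commutator_cA_of_Uu_sub_Vv_mul (Y.t_zero_of_ne hkl) (Y.t_zero_self k) (Y.t_zero_of_ne hil)
    (Y.rtt_of_ne hki hlk)

end YRso3

end Yangian

lemma eq_sub_mul_self_of_mul_sub_mul {B : Type} [Ring B] {k k' c e e' : B} (hk : k' * k = 1)
    (hc : k * c - c * k = k * e) (he : k * e * -c - -c * (k * e) = k * e') :
    e' = (c * e - e * c) - e * e := by
  have hck : c * k = k * c - k * e := by rw [← hc]; noncomm_ring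
  have hke' : k * e' = k * ((c * e - e * c) - e * e) := by
    rw [← he, neg_mul, mul_neg, sub_neg_eq_add, neg_add_eq_sub, ← mul_assoc, hck]; noncomm_ring
  rw [← one_mul e', ← hk, mul_assoc, hke', ← mul_assoc, hk, one_mul]

/-- `e₋₁,₁(u) = [e⁽¹⁾₋₁,₀, e₋₁,₀(u)] - e₋₁,₀(u)²`, where `e⁽¹⁾₋₁,₀`
is the coefficient of `u⁻¹` in `e₋₁,₀(u)`. -/
theorem stmt13 (A : Type) [Ring A] [Algebra ℚ A] (Y : YRso3 A) :
    su Y.e11 = (cA (Y.e10 1) * su Y.e10 - su Y.e10 * cA (Y.e10 1)) - su Y.e10 * su Y.e10 := by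
  have hc : Y.t 1 2 1 = -Y.e10 1 := by
    rw [← Y.t01_one_eq_e10_one]
    exact eq_neg_of_add_eq_zero_right Y.t01_one_add_t12_one
  have hk := Y.su_t_commutator_cA_t_one (i := 0) (k := 0) (l := 1)
    (by decide) (by decide) (by decide) (by decide)
  have he := Y.su_t_commutator_cA_t_one (i := 0) (k := 1) (l := 2)
    (by decide) (by decide) (by decide) (by decide)
  rw [Y.t01_one_eq_e10_one, Y.g11, Y.g12] at hk
  rw [hc, cA_neg, Y.g12, Y.g13] at he
  exact eq_sub_mul_self_of_mul_sub_mul Y.km1_inv₂ hk he
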